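/- arXiv:2305.09873 — 6 statements merged into one kernel-verified Lean document; each statement's English description precedes it below -/
import Mathlib

section
/- Define φ(z) = 2(e^z − 1 − z)/z² for z ≠ 0 and φ(0) = 1. Then for fixed x < 0, the function t ↦ φ(x·t) is strictly decreasing on t ∈ (0, ∞). -/
/-! Away from `0`, `φ' z = 2 g(z) / z ^ 3` with `g z = (z - 2) e^z + z + 2`. Since
`g 0 = 0` and `g' z = (z - 1) e^z + 1 > 0` for `z ≠ 0` (this is `e^{-z} > 1 - z`),
`g` is negative on `(-∞, 0)`, so `φ` is strictly increasing there, and `t ↦ x t`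
reverses the order of `(0, ∞)` into `(-∞, 0)`. -/

noncomputable def φ (z : ℝ) : ℝ :=
  if z = 0 then 1 else 2 * (Real.exp z - 1 - z) / z ^ 2

open Real Set

lemma one_sub_mul_exp_lt_one {z : ℝ} (hz : z ≠ 0) : (1 - z) * exp z < 1 := by
  rcases le_or_gt (1 - z) 0 with hle | hpos
  · nlinarith [exp_pos z]
  · calc (1 - z) * exp z < exp (-z) * exp z :=
          mul_lt_mul_of_pos_right (by linarith [add_one_lt_exp (neg_ne_zero.mpr hz)]) (exp_pos z)
      _ = 1 := by rw [← exp_add, neg_add_cancel, exp_zero]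

lemma hasDerivAt_sub_two_mul_exp_add (z : ℝ) :
    HasDerivAt (fun z => (z - 2) * exp z + z + 2) ((z - 1) * exp z + 1) z :=
  ((((hasDerivAt_id' z).sub_const 2).mul (hasDerivAt_exp z)).add
    (hasDerivAt_id' z)).add_const 2 |>.congr_deriv (by ring)

lemma sub_two_mul_exp_add_neg {z : ℝ} (hz : z < 0) : (z - 2) * exp z + z + 2 < 0 := by
  have hmono : StrictMonoOn (fun z => (z - 2) * exp z + z + 2) (Iic 0) := by
    refine strictMonoOn_of_deriv_pos (convex_Iic 0) (by fun_prop) fun y hy => ?_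
    rw [interior_Iic] at hy
    rw [(hasDerivAt_sub_two_mul_exp_add y).deriv]
    linarith [one_sub_mul_exp_lt_one hy.ne]
  simpa using hmono hz.le self_mem_Iic hz

lemma hasDerivAt_phi {z : ℝ} (hz : z ≠ 0) :
    HasDerivAt φ (2 * ((z - 2) * exp z + z + 2) / z ^ 3) z := by
  have hquot : HasDerivAt (fun z => 2 * (exp z - 1 - z) / z ^ 2)
      ((2 * (exp z - 1) * z ^ 2 - 2 * (exp z - 1 - z) * (2 * z)) / (z ^ 2) ^ 2) z := by
    have hnum := (((hasDerivAt_exp z).sub_const 1).sub (hasDerivAt_id z)).const_mul 2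
    have hden : HasDerivAt (fun z : ℝ => z ^ 2) (2 * z) z := by simpa using hasDerivAt_pow 2 z
    exact hnum.div hden (pow_ne_zero 2 hz)
  have hφ : φ =ᶠ[nhds z] fun z => 2 * (exp z - 1 - z) / z ^ 2 := by
    filter_upwards [isOpen_ne.mem_nhds hz] with w hw
    simp [φ, hw]
  refine (hquot.congr_of_eventuallyEq hφ).congr_deriv ?_
  field_simp
  ring

lemma phi_strictMonoOn_Iio : StrictMonoOn φ (Iio 0) := by
  refine strictMonoOn_of_deriv_pos (convex_Iio 0)
    (fun z hz => (hasDerivAt_phi (ne_of_lt hz)).continuousAt.continuousWithinAt) fun z hz => ?_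
  rw [interior_Iio] at hz
  rw [(hasDerivAt_phi (ne_of_lt hz)).deriv]
  exact div_pos_of_neg_of_neg (by linarith [sub_two_mul_exp_add_neg hz]) (Odd.pow_neg (by decide) hz)

theorem phi_strictAnti (x : ℝ) (hx : x < 0) :
    StrictAntiOn (fun t : ℝ => φ (x * t)) (Set.Ioi 0) := fun _ hs _ ht hst =>
  phi_strictMonoOn_Iio (mul_neg_of_neg_of_pos hx ht) (mul_neg_of_neg_of_pos hx hs)
    (mul_lt_mul_of_neg_left hst hx)
end

section
/- The function φ(z) = 2(e^z − 1 − z)/z² (with φ(0) = 1) is monotone increasing on [0, ∞). -/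
theorem monotoneOn_of_hasSum_nonneg_coeff {c : ℕ → ℝ} {f : ℝ → ℝ} (hc : ∀ j, 0 ≤ c j)
    (hf : ∀ z, 0 ≤ z → HasSum (fun j => c j * z ^ j) (f z)) : MonotoneOn f (Set.Ici 0) :=
  fun _ hx _ hy hxy => hasSum_le (fun j => by gcongr; exact hc j) (hf _ hx) (hf _ hy)

theorem Real.hasSum_pow_add_two_div_factorial (z : ℝ) :
    HasSum (fun j : ℕ => z ^ (j + 2) / (j + 2).factorial) (Real.exp z - 1 - z) := by
  have h := (hasSum_nat_add_iff' 2).mpr (NormedSpace.expSeries_div_hasSum_exp z)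
  simpa [Finset.sum_range_succ, ← Real.exp_eq_exp_ℝ, sub_sub] using h

theorem hasSum_phi (z : ℝ) : HasSum (fun j : ℕ => 2 / (j + 2).factorial * z ^ j) (φ z) := by
  unfold φ
  split_ifs with hz
  · subst hz
    convert hasSum_ite_eq 0 (1 : ℝ) using 2 with j
    rcases j with _ | j <;> simp
  · have h := (Real.hasSum_pow_add_two_div_factorial z).mul_left (2 / z ^ 2)
    rw [div_mul_eq_mul_div] at h
    refine h.congr_fun fun j => ?_
    field_simp
    ring

theorem phi_monotoneOn : MonotoneOn φ (Set.Ici 0) :=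
  monotoneOn_of_hasSum_nonneg_coeff (fun _ => by positivity) (fun z _ => hasSum_phi z)
end

section
/- For all x < 0 and t ∈ [0, 1], exp(−x²·φ(x·t)) ≤ exp(2x + 2), where φ(z) = 2(e^z − 1 − z)/z² and φ(0) = 1. -/
/-! For `t ≤ 1`, `1 - t ≤ exp (-t)` and `1 + u ≤ exp u` give
`exp (x t) ≥ (1 - t)(1 + (1 + x) t) = 1 + x t - (1 + x) t²`, i.e.
`x² φ (x t) = 2 (exp (x t) - 1 - x t) / t² ≥ -2 (1 + x)`. -/

open Real

theorem one_sub_mul_one_add_mul_le_exp {x t : ℝ} (ht : t ≤ 1) :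
    (1 - t) * (1 + (1 + x) * t) ≤ exp (x * t) :=
  calc (1 - t) * (1 + (1 + x) * t)
      ≤ (1 - t) * exp ((1 + x) * t) :=
        mul_le_mul_of_nonneg_left (by linarith [add_one_le_exp ((1 + x) * t)]) (by linarith)
    _ ≤ exp (-t) * exp ((1 + x) * t) :=
        mul_le_mul_of_nonneg_right (by linarith [add_one_le_exp (-t)]) (exp_pos _).le
    _ = exp (x * t) := by rw [← exp_add]; ring_nf

theorem neg_two_mul_one_add_le_sq_mul_φ (x : ℝ) {t : ℝ} (ht : t ≤ 1) :
    -(2 * (1 + x)) ≤ x ^ 2 * φ (x * t) := by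
  by_cases hxt : x * t = 0
  · simp only [φ, hxt, if_true, mul_one]
    nlinarith [sq_nonneg (x + 1)]
  · obtain ⟨hx, ht0⟩ := mul_ne_zero_iff.mp hxt
    have hφ : x ^ 2 * φ (x * t) = 2 * (exp (x * t) - 1 - x * t) / t ^ 2 := by
      rw [φ, if_neg hxt]
      field_simp
    rw [hφ, le_div_iff₀ (by positivity)]
    linarith [one_sub_mul_one_add_mul_le_exp (x := x) ht,
      show (1 - t) * (1 + (1 + x) * t) = 1 + x * t - (1 + x) * t ^ 2 by ring]

theorem integrand_bound_neg_general (x t : ℝ) (ht : t ∈ Set.Icc (0:ℝ) 1) :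
    Real.exp (-(x ^ 2 * φ (x * t))) ≤ Real.exp (2 * x + 2) :=
  exp_le_exp.mpr (by linarith [neg_two_mul_one_add_le_sq_mul_φ x ht.2])

theorem integrand_bound_neg (x t : ℝ) (hx : x < 0) (ht : t ∈ Set.Icc (0:ℝ) 1) :
    Real.exp (-(x ^ 2 * φ (x * t))) ≤ Real.exp (2 * x + 2) :=
  integrand_bound_neg_general x t ht
end

section
/- For t > 0, define f(t) = (1/√π) ∫_{−∞}^{∞} exp(−x²·φ(x·t)) dx, where φ(z) = 2(e^z − 1 − z)/z², φ(0) = 1. Then lim_{t→0⁺} f(t) = 1. -/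
/-!
Write `φ z = 2 (eᶻ - 1 - z) / z²`. Since `φ z → 1` as `z → 0`, the integrand `exp (-x² φ (x t))`
tends pointwise to the Gaussian `exp (-x²)`, whose integral is `√π`. To apply dominated
convergence one needs a lower bound on `x² φ (x t)` that is uniform in `t ∈ (0, 1]`: from
`φ z ≥ 1 / (1 + |z|)` one gets `x² φ (x t) ≥ x² / (1 + |x|) ≥ |x| - 1`, so the integrands are
dominated by the integrable function `exp (1 - |x|)`.
-/

open Real Filter MeasureTheory Set Topology

noncomputable def f (t : ℝ) : ℝ :=
  (Real.sqrt Real.pi)⁻¹ * ∫ x : ℝ, Real.exp (-(x ^ 2 * φ (x * t)))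

lemma sq_le_two_mul_one_sub_mul_exp_sub_one_sub_of_nonpos {z : ℝ} (hz : z ≤ 0) :
    z ^ 2 ≤ 2 * (1 - z) * (exp z - 1 - z) := by
  let g : ℝ → ℝ := fun z ↦ 2 * (1 - z) * (exp z - 1 - z) - z ^ 2
  have hg' (z : ℝ) : HasDerivAt g (2 * z * (1 - exp z)) z :=
    (((((hasDerivAt_id' z).const_sub 1).const_mul 2).mul
      (((hasDerivAt_exp z).sub_const 1).sub (hasDerivAt_id' z))).sub
      (hasDerivAt_pow 2 z)).congr_deriv (by simp only [Pi.sub_apply]; ring)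
  have hg : AntitoneOn g (Iic 0) := by
    refine antitoneOn_of_deriv_nonpos (convex_Iic 0)
      (fun z _ ↦ (hg' z).continuousAt.continuousWithinAt)
      (fun z _ ↦ (hg' z).differentiableAt.differentiableWithinAt) fun z hz ↦ ?_
    rw [interior_Iic, mem_Iio] at hz
    rw [(hg' z).deriv]
    nlinarith [exp_lt_one_iff.mpr hz]
  have h := hg hz (mem_Iic.mpr le_rfl) hz
  norm_num [g] at h
  linarith

lemma inv_one_sub_le_phi_of_nonpos {z : ℝ} (hz : z ≤ 0) : (1 - z)⁻¹ ≤ φ z := by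
  rcases hz.lt_or_eq with hz | rfl
  · rw [φ, if_neg hz.ne, inv_le_iff_one_le_mul₀' (by linarith), mul_div_assoc',
      le_div_iff₀ (sq_pos_of_neg hz)]
    linarith [sq_le_two_mul_one_sub_mul_exp_sub_one_sub_of_nonpos hz.le]
  · simp [φ]

lemma one_le_phi_of_nonneg {z : ℝ} (hz : 0 ≤ z) : 1 ≤ φ z := by
  rcases hz.lt_or_eq with hz | rfl
  · rw [φ, if_neg hz.ne', le_div_iff₀ (by positivity)]
    linarith [quadratic_le_exp_of_nonneg hz.le]
  · simp [φ]

lemma inv_one_add_abs_le_phi (z : ℝ) : (1 + |z|)⁻¹ ≤ φ z := by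
  rcases le_total z 0 with hz | hz
  · simpa [abs_of_nonpos hz, sub_eq_add_neg] using inv_one_sub_le_phi_of_nonpos hz
  · exact (inv_le_one_of_one_le₀ (by linarith [abs_nonneg z])).trans (one_le_phi_of_nonneg hz)

lemma abs_sub_one_le_sq_mul_phi (x : ℝ) {t : ℝ} (ht₀ : 0 ≤ t) (ht₁ : t ≤ 1) :
    |x| - 1 ≤ x ^ 2 * φ (x * t) := by
  have hxt : |x * t| ≤ |x| := by
    rw [abs_mul, abs_of_nonneg ht₀]
    exact mul_le_of_le_one_right (abs_nonneg x) ht₁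
  calc |x| - 1 ≤ x ^ 2 / (1 + |x|) := by
        rw [le_div_iff₀ (by positivity)]
        nlinarith [sq_abs x]
    _ ≤ x ^ 2 / (1 + |x * t|) := by gcongr
    _ ≤ x ^ 2 * φ (x * t) := by
        rw [div_eq_mul_inv]
        exact mul_le_mul_of_nonneg_left (inv_one_add_abs_le_phi _) (sq_nonneg x)

lemma abs_phi_sub_one_le {z : ℝ} (hz : |z| ≤ 1) : |φ z - 1| ≤ |z| := by
  rcases eq_or_ne z 0 with rfl | hz₀
  · simp [φ]
  have hz₂ : 0 < z ^ 2 := by positivity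
  -- Taylor remainder of order three: `|eᶻ - (1 + z + z²/2)| ≤ (2/9) |z|³`
  have htaylor := exp_bound hz (n := 3) (by norm_num)
  simp only [Finset.sum_range_succ, Finset.sum_range_zero] at htaylor
  norm_num [Nat.factorial] at htaylor
  have hφ : φ z - 1 = 2 * (exp z - (1 + z + z ^ 2 / 2)) / z ^ 2 := by
    rw [φ, if_neg hz₀]
    field_simp
    ring
  rw [hφ, abs_div, abs_mul, abs_two, abs_of_pos hz₂, div_le_iff₀ hz₂]
  have : |z| ^ 3 = |z| * z ^ 2 := by rw [← sq_abs z]; ring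
  nlinarith [abs_nonneg z]

lemma tendsto_phi_nhds_zero : Tendsto φ (𝓝 0) (𝓝 1) := by
  have hle : ∀ᶠ z in 𝓝 (0 : ℝ), ‖φ z - 1‖ ≤ |z| := by
    filter_upwards [Metric.closedBall_mem_nhds (0 : ℝ) one_pos] with z hz
    rw [Metric.mem_closedBall, dist_zero_right, norm_eq_abs] at hz
    exact abs_phi_sub_one_le hz
  have habs : Tendsto (fun z : ℝ ↦ |z|) (𝓝 0) (𝓝 0) := by
    simpa using continuous_abs.tendsto (0 : ℝ)
  simpa using (squeeze_zero_norm' hle habs).add_const 1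

@[fun_prop]
lemma measurable_phi : Measurable φ :=
  Measurable.ite (measurableSet_singleton 0) measurable_const (by fun_prop)

lemma integrable_exp_neg_abs : Integrable fun x : ℝ ↦ exp (-|x|) := by
  rw [← integrableOn_univ, ← Iic_union_Ioi (a := (0 : ℝ)), integrableOn_union]
  constructor
  · refine (integrableOn_exp_Iic 0).congr_fun (fun x hx ↦ ?_) measurableSet_Iic
    rw [abs_of_nonpos hx, neg_neg]
  · refine (exp_neg_integrableOn_Ioi 0 one_pos).congr_fun (fun x hx ↦ ?_) measurableSet_Ioi
    simp only [abs_of_pos (mem_Ioi.mp hx), neg_one_mul]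

lemma tendsto_integral_exp_neg_sq_mul_phi :
    Tendsto (fun t ↦ ∫ x : ℝ, exp (-(x ^ 2 * φ (x * t)))) (𝓝[>] 0) (𝓝 (∫ x : ℝ, exp (-x ^ 2))) := by
  refine tendsto_integral_filter_of_dominated_convergence (fun x ↦ exp 1 * exp (-|x|))
    (Eventually.of_forall fun t ↦ ?_) ?_ (integrable_exp_neg_abs.const_mul _)
    (ae_of_all _ fun x ↦ ?_)
  · fun_prop
  · filter_upwards [Ioc_mem_nhdsGT (zero_lt_one' ℝ)] with t ht
    refine ae_of_all _ fun x ↦ ?_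
    rw [norm_of_nonneg (exp_pos _).le, ← exp_add, exp_le_exp]
    linarith [abs_sub_one_le_sq_mul_phi x ht.1.le ht.2]
  · have hxt : Tendsto (fun t ↦ x * t) (𝓝[>] 0) (𝓝 0) := by
      simpa using ((continuous_const_mul x).tendsto 0).mono_left nhdsWithin_le_nhds
    simpa using ((tendsto_phi_nhds_zero.comp hxt).const_mul (x ^ 2)).neg.rexp

theorem f_tendsto_one :
    Filter.Tendsto f (nhdsWithin 0 (Set.Ioi 0)) (nhds 1) := by
  have hgauss : ∫ x : ℝ, exp (-x ^ 2) = √π := by simpa using integral_gaussian 1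
  have h := tendsto_integral_exp_neg_sq_mul_phi.const_mul (√π)⁻¹
  rwa [hgauss, inv_mul_cancel₀ (by positivity)] at h
end

section
/- For every t > 0, (1/√π) ∫_{−∞}^{∞} exp(−x²·φ(x·t)) dx = Γ(2/t²)·e^{2/t²}·(t²/2)^{2/t²}/(t·√π), where φ(z) = 2(e^z − 1 − z)/z², φ(0) = 1. -/
open MeasureTheory Set

theorem f_eq_Gamma (t : ℝ) (ht : 0 < t) :
    (Real.sqrt Real.pi)⁻¹ * ∫ x : ℝ, Real.exp (-(x ^ 2 * φ (x * t)))
      = Real.Gamma (2 / t ^ 2) * Real.exp (2 / t ^ 2) * (t ^ 2 / 2) ^ (2 / t ^ 2)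
        / (t * Real.sqrt Real.pi) := by
  set a : ℝ := 2 / t ^ 2 with ha
  have ha0 : 0 < a := by positivity
  have h1 : ∀ x : ℝ, Real.exp (-(x ^ 2 * φ (x * t)))
      = Real.exp a * Real.exp (a * (t * x) - a * Real.exp (t * x)) := by
    intro x
    rw [← Real.exp_add]
    congr 1
    rcases eq_or_ne x 0 with rfl | hx
    · simp [φ, ha]
    · have hxt : x * t ≠ 0 := mul_ne_zero hx ht.ne'
      rw [φ, if_neg hxt, ha, mul_comm x t]
      have ht2 : (t : ℝ) ≠ 0 := ht.ne'
      field_simp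
      ring
  have h3 : (∫ y : ℝ, Real.exp (a * y - a * Real.exp y))
      = ∫ u in Ioi (0 : ℝ), u ^ (a - 1) * Real.exp (-(a * u)) := by
    have key := integral_image_eq_integral_abs_deriv_smul (s := (univ : Set ℝ))
      (f := Real.exp) (f' := Real.exp) MeasurableSet.univ
      (fun x _ => (Real.hasDerivAt_exp x).hasDerivWithinAt)
      (Real.exp_injective.injOn)
      (fun u => u ^ (a - 1) * Real.exp (-(a * u)))
    rw [image_univ, Real.range_exp, setIntegral_univ] at key
    rw [key]
    congr 1 with x
    rw [abs_of_pos (Real.exp_pos x), smul_eq_mul, ← Real.exp_mul, ← Real.exp_add,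
      ← Real.exp_add]
    congr 1
    ring
  have h4 : (∫ u in Ioi (0 : ℝ), u ^ (a - 1) * Real.exp (-(a * u)))
      = (1 / a) ^ a * Real.Gamma a := Real.integral_rpow_mul_exp_neg_mul_Ioi ha0 ha0
  have h2 : (∫ x : ℝ, Real.exp (a * (t * x) - a * Real.exp (t * x)))
      = |t⁻¹| • ∫ y : ℝ, Real.exp (a * y - a * Real.exp y) :=
    MeasureTheory.Measure.integral_comp_mul_left (fun y => Real.exp (a * y - a * Real.exp y)) t
  have hcalc : (∫ x : ℝ, Real.exp (-(x ^ 2 * φ (x * t))))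
      = Real.exp a * (t⁻¹ * ((1 / a) ^ a * Real.Gamma a)) := by
    simp_rw [h1]
    rw [integral_const_mul, h2, h3, h4, smul_eq_mul,
      abs_of_pos (inv_pos.mpr ht)]
  rw [hcalc]
  have h1a : (1 / a) = t ^ 2 / 2 := by rw [ha, one_div_div]
  rw [h1a]
  have hπ : Real.sqrt Real.pi ≠ 0 := by positivity
  field_simp
end

section
/- For every positive integer n, (1/√π) ∫_{−∞}^{∞} exp(−x²·φ(x·√(2/n))) dx = n!·e^n/(n^n·√(2πn)), where φ(z) = 2(e^z − 1 − z)/z², φ(0) = 1. -/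
/-!
For `c > 0` and `a = 2 / c²` the integrand is `exp a · exp (a·(c x) − a·exp (c x))`. After scaling
`u = c x`, the substitution `t = exp u` turns `∫ exp (a u − a exp u) du` into the Gamma integral
`∫₀^∞ t^(a−1) e^(−a t) dt = a^(−a) Γ(a)`. With `c = √(2/n)` we get `a = n`, and `n! = n Γ(n)`.
-/

open Real MeasureTheory Set

lemma integral_exp_mul_sub_mul_exp {a : ℝ} (ha : 0 < a) :
    ∫ x : ℝ, exp (a * x - a * exp x) = (1 / a) ^ a * Gamma a := by
  rw [← integral_rpow_mul_exp_neg_mul_Ioi ha ha, ← range_exp, ← image_univ,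
    integral_image_eq_integral_abs_deriv_smul MeasurableSet.univ
      (fun x _ => (hasDerivAt_exp x).hasDerivWithinAt) exp_injective.injOn _,
    Measure.restrict_univ]
  congr 1 with x
  rw [abs_of_pos (exp_pos x), smul_eq_mul, rpow_def_of_pos (exp_pos x), log_exp,
    ← exp_add, ← exp_add]
  ring_nf

lemma sq_mul_φ_mul {c : ℝ} (hc : c ≠ 0) (x : ℝ) :
    x ^ 2 * φ (x * c) = 2 / c ^ 2 * (exp (c * x) - 1 - c * x) := by
  rcases eq_or_ne x 0 with rfl | hx
  · simp [φ]
  · rw [φ, if_neg (mul_ne_zero hx hc)]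
    field_simp

lemma integral_exp_neg_sq_mul_φ_mul {c : ℝ} (hc : 0 < c) :
    ∫ x : ℝ, exp (-(x ^ 2 * φ (x * c)))
      = c⁻¹ * exp (2 / c ^ 2) * (1 / (2 / c ^ 2)) ^ (2 / c ^ 2) * Gamma (2 / c ^ 2) := by
  set a := 2 / c ^ 2 with ha_def
  have ha : 0 < a := by positivity
  have hpt : ∀ x : ℝ, exp (-(x ^ 2 * φ (x * c))) = exp a * exp (a * (c * x) - a * exp (c * x)) := by
    intro x
    rw [sq_mul_φ_mul hc.ne', ← ha_def, ← exp_add]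
    ring_nf
  simp_rw [hpt]
  rw [integral_const_mul, Measure.integral_comp_mul_left (fun u => exp (a * u - a * exp u)),
    integral_exp_mul_sub_mul_exp ha, smul_eq_mul, abs_of_pos (inv_pos.mpr hc)]
  ring

theorem f_eq_stirling_ratio (n : ℕ) (hn : 0 < n) :
    (Real.sqrt Real.pi)⁻¹ *
        ∫ x : ℝ, Real.exp (-(x ^ 2 * φ (x * Real.sqrt (2 / n))))
      = (Nat.factorial n : ℝ) * Real.exp n / ((n : ℝ) ^ n * Real.sqrt (2 * Real.pi * n)) := by
  have hn0 : (0 : ℝ) < n := Nat.cast_pos.mpr hn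
  have ha : 2 / sqrt (2 / n) ^ 2 = n := by
    rw [sq_sqrt (by positivity)]
    field_simp
  rw [integral_exp_neg_sq_mul_φ_mul (sqrt_pos.mpr (by positivity)), ha, rpow_natCast,
    ← Gamma_nat_eq_factorial, Gamma_add_one hn0.ne']
  have hsqrt : sqrt (2 * π * n) = sqrt π * sqrt (2 / n) * n := by
    rw [sqrt_eq_iff_mul_self_eq_of_pos (by positivity), ← sq]
    ring_nf
    rw [sq_sqrt pi_pos.le, sq_sqrt (by positivity)]
    field_simp
  rw [hsqrt, one_div_pow]
  field_simp
end
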